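/- For positive definite matrices X, A, B and t ∈ [0,1], the Riemannian trace distance satisfies d(X #_{-t} A, X #_{-t} B) = d(X #_t A, X #_t B). -/

import Mathlib

open MeasureTheory
open scoped ComplexOrder

abbrev Mat (m : ℕ) := Matrix (Fin m) (Fin m) ℂ

noncomputable instance {m : ℕ} : MeasurableSpace (Mat m) := borel _
instance {m : ℕ} : BorelSpace (Mat m) := ⟨rfl⟩

/-- Functional calculus on Hermitian matrices (junk value `A` otherwise). -/
noncomputable def matFun {m : ℕ} (f : ℝ → ℝ) (A : Mat m) : Mat m :=
  if h : A.IsHermitian then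
    (h.eigenvectorUnitary : Mat m) *
      Matrix.diagonal (fun i => (f (h.eigenvalues i) : ℂ)) *
      star (h.eigenvectorUnitary : Mat m)
  else A

/-- Real power `A^t` of a positive definite matrix, via the spectral decomposition. -/
noncomputable def mpow {m : ℕ} (A : Mat m) (t : ℝ) : Mat m := matFun (fun x => x ^ t) A

/-- Logarithm of a positive definite matrix, via the spectral decomposition. -/
noncomputable def mlog {m : ℕ} (A : Mat m) : Mat m := matFun Real.log A

/-- The operator norm of a matrix (acting on the Euclidean space). -/
noncomputable def opN {m : ℕ} (A : Mat m) : ℝ :=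
  ‖(Matrix.toEuclideanCLM (𝕜 := ℂ) A : EuclideanSpace ℂ (Fin m) →L[ℂ] EuclideanSpace ℂ (Fin m))‖

/-- The Frobenius (Hilbert-Schmidt) norm of a matrix. -/
noncomputable def fnorm {m : ℕ} (A : Mat m) : ℝ :=
  Real.sqrt (∑ i, ∑ j, ‖A i j‖ ^ 2)

/-- The Riemannian trace metric distance `d(A,B) = ‖log (A^{-1/2} B A^{-1/2})‖₂`. -/
noncomputable def rdist {m : ℕ} (A B : Mat m) : ℝ :=
  fnorm (mlog (mpow A (-(1/2 : ℝ)) * B * mpow A (-(1/2 : ℝ))))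

/-- The `t`-weighted geometric mean `X #_t A = X^{1/2} (X^{-1/2} A X^{-1/2})^t X^{1/2}`. -/
noncomputable def geom {m : ℕ} (X : Mat m) (t : ℝ) (A : Mat m) : Mat m :=
  mpow X (1/2 : ℝ) * mpow (mpow X (-(1/2 : ℝ)) * A * mpow X (-(1/2 : ℝ))) t * mpow X (1/2 : ℝ)

/-- Finite first moment for a measure on positive definite matrices. -/
def HasFFM {m : ℕ} (μ : Measure (Mat m)) : Prop :=
  ∃ Y : Mat m, Y.PosDef ∧ Integrable (fun A => rdist A Y) μ

/-- Couplings of two probability measures. -/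
def couplings {m : ℕ} (μ ν : Measure (Mat m)) : Set (Measure (Mat m × Mat m)) :=
  {π | IsProbabilityMeasure π ∧ π.map Prod.fst = μ ∧ π.map Prod.snd = ν}

/-- The 1-Wasserstein distance with respect to the Riemannian trace metric. -/
noncomputable def W1 {m : ℕ} (μ ν : Measure (Mat m)) : ℝ :=
  sInf ((fun π : Measure (Mat m × Mat m) => ∫ p, rdist p.1 p.2 ∂π) '' couplings μ ν)

/-!
Since `X #_{-t} A = X (X #_t A)⁻¹ X`, the pair `(X #_{-t} A, X #_{-t} B)` is obtained from
`(X #_t A, X #_t B)` by inversion followed by congruence with `X`, and both maps are isometries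
of `d`. For congruence by an invertible `M`, put `P' = M P M*`: the matrix
`V = P'^{-1/2} M P^{1/2}` is unitary and conjugates `P^{-1/2} Q P^{-1/2}` into
`P'^{-1/2} (M Q M*) P'^{-1/2}`; the logarithm commutes with unitary conjugation and the Frobenius
norm is unitarily invariant. Invariance under inversion reduces, after a congruence by `P^{1/2}`,
to `log S⁻¹ = -log S`.
-/

open Matrix

section FunctionalCalculus
variable {m : ℕ}

lemma matFun_eq_cfc {A : Mat m} (hA : A.IsHermitian) (f : ℝ → ℝ) : matFun f A = cfc f A := by
  rw [matFun, dif_pos hA, hA.cfc_eq]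
  rfl

lemma mpow_eq_cfc {A : Mat m} (hA : A.IsHermitian) (t : ℝ) :
    mpow A t = cfc (fun x : ℝ => x ^ t) A :=
  matFun_eq_cfc hA _

lemma mlog_eq_cfc {A : Mat m} (hA : A.IsHermitian) : mlog A = cfc Real.log A :=
  matFun_eq_cfc hA _

lemma continuousOn_spectrum (A : Mat m) (f : ℝ → ℝ) : ContinuousOn f (spectrum ℝ A) :=
  A.finite_real_spectrum.continuousOn f

lemma Matrix.PosDef.pos_of_mem_spectrum {A : Mat m} (hA : A.PosDef) {x : ℝ}
    (hx : x ∈ spectrum ℝ A) : 0 < x := by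
  rw [hA.isHermitian.spectrum_real_eq_range_eigenvalues] at hx
  obtain ⟨i, rfl⟩ := hx
  exact hA.eigenvalues_pos i

lemma matFun_unitary_conj {U W : Mat m} (hU : U ∈ unitary (Mat m)) (hW : W.IsHermitian)
    (f : ℝ → ℝ) : matFun f (U * W * star U) = U * matFun f W * star U := by
  let φ := Unitary.conjStarAlgAut ℂ (Mat m) ⟨U, hU⟩
  have hφW : (φ W).IsHermitian := by
    rw [IsHermitian, ← star_eq_conjTranspose, ← map_star, star_eq_conjTranspose, hW.eq]
  have hφ : Continuous φ := by
    show Continuous fun Y : Mat m => U * Y * star U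
    fun_prop
  change matFun f (φ W) = φ (matFun f W)
  rw [matFun_eq_cfc hW, matFun_eq_cfc hφW]
  exact (StarAlgHomClass.map_cfc φ f W (continuousOn_spectrum W f) hφ hW.isSelfAdjoint
    hφW.isSelfAdjoint).symm

end FunctionalCalculus

section Powers
variable {m : ℕ}

lemma Matrix.PosDef.mul_mul_conjTranspose_of_isUnit {P M : Mat m} (hP : P.PosDef)
    (hM : IsUnit M) : (M * P * Mᴴ).PosDef :=
  hP.mul_mul_conjTranspose_same (vecMul_injective_iff_isUnit.2 hM)

lemma mpow_isHermitian {A : Mat m} (hA : A.IsHermitian) (t : ℝ) : (mpow A t).IsHermitian := by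
  rw [mpow_eq_cfc hA]
  exact cfc_predicate _ A

lemma mpow_add {A : Mat m} (hA : A.PosDef) (s t : ℝ) :
    mpow A (s + t) = mpow A s * mpow A t := by
  simp only [mpow_eq_cfc hA.isHermitian]
  rw [← cfc_mul _ _ A (continuousOn_spectrum A _) (continuousOn_spectrum A _)]
  exact cfc_congr fun x hx => Real.rpow_add (hA.pos_of_mem_spectrum hx) s t

lemma mpow_zero {A : Mat m} (hA : A.IsHermitian) : mpow A 0 = 1 := by
  simp only [mpow_eq_cfc hA, Real.rpow_zero]
  exact cfc_const_one ℝ A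

lemma mpow_one {A : Mat m} (hA : A.IsHermitian) : mpow A 1 = A := by
  simp only [mpow_eq_cfc hA, Real.rpow_one]
  exact cfc_id' ℝ A

lemma one_mpow (t : ℝ) : mpow (1 : Mat m) t = 1 := by
  rw [mpow_eq_cfc isHermitian_one, ← map_one (algebraMap ℝ (Mat m)), cfc_algebraMap,
    Real.one_rpow]

lemma mpow_mul_mpow_of_add_eq_zero {A : Mat m} (hA : A.PosDef) {s t : ℝ} (h : s + t = 0) :
    mpow A s * mpow A t = 1 := by
  rw [← mpow_add hA, h, mpow_zero hA.isHermitian]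

lemma mpow_mul_mpow_mul_mpow_of_add_eq_zero {A : Mat m} (hA : A.PosDef) {r s t : ℝ}
    (h : r + s + t = 0) : mpow A r * mpow A s * mpow A t = 1 := by
  rw [← mpow_add hA, mpow_mul_mpow_of_add_eq_zero hA h]

lemma mpow_isUnit {A : Mat m} (hA : A.PosDef) (t : ℝ) : IsUnit (mpow A t) :=
  IsUnit.of_mul_eq_one _ (mpow_mul_mpow_of_add_eq_zero hA (add_neg_cancel t))

lemma inv_mpow {A : Mat m} (hA : A.PosDef) (t : ℝ) : (mpow A t)⁻¹ = mpow A (-t) :=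
  inv_eq_left_inv (mpow_mul_mpow_of_add_eq_zero hA (neg_add_cancel t))

lemma inv_eq_mpow_neg_one {A : Mat m} (hA : A.PosDef) : A⁻¹ = mpow A (-1) := by
  rw [← inv_mpow hA, mpow_one hA.isHermitian]

lemma mpow_posDef {A : Mat m} (hA : A.PosDef) (t : ℝ) : (mpow A t).PosDef := by
  have h := PosDef.one.mul_mul_conjTranspose_of_isUnit (mpow_isUnit hA (t / 2))
  rwa [mul_one, (mpow_isHermitian hA.isHermitian _).eq, ← mpow_add hA, add_halves] at h

lemma Matrix.PosDef.mpow_mul_mul_mpow {A P : Mat m} (hP : P.PosDef) (hA : A.PosDef) (t : ℝ) :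
    (mpow A t * P * mpow A t).PosDef := by
  have h := hP.mul_mul_conjTranspose_of_isUnit (mpow_isUnit hA t)
  rwa [(mpow_isHermitian hA.isHermitian t).eq] at h

lemma mlog_inv {S : Mat m} (hS : S.PosDef) : mlog S⁻¹ = -mlog S := by
  have hS' : (cfc (fun x : ℝ => x ^ (-1 : ℝ)) S).IsHermitian := cfc_predicate _ S
  rw [inv_eq_mpow_neg_one hS, mpow_eq_cfc hS.isHermitian, mlog_eq_cfc hS',
    mlog_eq_cfc hS.isHermitian, ← cfc_comp' Real.log _ S
      ((S.finite_real_spectrum.image _).continuousOn _) (continuousOn_spectrum S _)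
      hS.isHermitian.isSelfAdjoint, ← cfc_neg Real.log S]
  refine cfc_congr fun x hx => ?_
  rw [Real.rpow_neg_one, Real.log_inv]

end Powers

section FrobeniusNorm
variable {m : ℕ}

lemma fnorm_eq_sqrt_trace (M : Mat m) : fnorm M = √(trace (star M * M)).re := by
  rw [fnorm, trace, Complex.re_sum, Finset.sum_comm]
  congr 1
  refine Finset.sum_congr rfl fun i _ => ?_
  rw [diag_apply, mul_apply, Complex.re_sum]
  refine Finset.sum_congr rfl fun j _ => ?_
  rw [star_apply, ← Complex.normSq_eq_norm_sq, mul_comm, Complex.star_def, Complex.mul_conj,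
    Complex.ofReal_re]

lemma fnorm_neg (M : Mat m) : fnorm (-M) = fnorm M := by
  simp [fnorm]

lemma fnorm_unitary_conj {U : Mat m} (hU : U ∈ unitary (Mat m)) (M : Mat m) :
    fnorm (U * M * star U) = fnorm M := by
  have hUU : star U * U = 1 := Unitary.star_mul_self_of_mem hU
  have key : trace (star (U * M * star U) * (U * M * star U)) = trace (star M * M) := by
    calc _ = trace (U * (star M * M) * star U) := by
          simp only [star_mul, star_star, mul_assoc]
          rw [← mul_assoc (star U) U, hUU, one_mul]
      _ = trace (star M * M) := by
          rw [trace_mul_cycle, ← mul_assoc, hUU, one_mul]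
  rw [fnorm_eq_sqrt_trace, fnorm_eq_sqrt_trace, key]

end FrobeniusNorm

section RiemannianDistance
variable {m : ℕ}

lemma rdist_congr {M P Q : Mat m} (hM : IsUnit M) (hP : P.PosDef) (hQ : Q.PosDef) :
    rdist (M * P * Mᴴ) (M * Q * Mᴴ) = rdist P Q := by
  set P' := M * P * Mᴴ
  have hP' : P'.PosDef := hP.mul_mul_conjTranspose_of_isUnit hM
  set H' := mpow P' (-(1/2))
  set H := mpow P (-(1/2))
  set K := mpow P (1/2)
  have hHK : H * K = 1 := mpow_mul_mpow_of_add_eq_zero hP (by norm_num)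
  have hKH : K * H = 1 := mpow_mul_mpow_of_add_eq_zero hP (by norm_num)
  have hKK : K * K = P := by rw [← mpow_add hP, add_halves, mpow_one hP.isHermitian]
  have hH'P'H' : H' * P' * H' = 1 := by
    conv_lhs => rw [← mpow_one hP'.isHermitian]
    exact mpow_mul_mpow_mul_mpow_of_add_eq_zero hP' (by norm_num)
  have sK : star K = K := (mpow_isHermitian hP.isHermitian _).eq
  have sH' : star H' = H' := (mpow_isHermitian hP'.isHermitian _).eq
  have hV : H' * M * K ∈ unitary (Mat m) := by
    rw [← unitaryGroup, mem_unitaryGroup_iff, star_mul, star_mul, sK, sH', star_eq_conjTranspose]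
    calc H' * M * K * (K * (Mᴴ * H')) = H' * (M * (K * K) * Mᴴ) * H' := by
          simp only [mul_assoc]
      _ = 1 := by rw [hKK, hH'P'H']
  have hconj : H' * (M * Q * Mᴴ) * H' = (H' * M * K) * (H * Q * H) * star (H' * M * K) := by
    rw [star_mul, star_mul, sK, sH', star_eq_conjTranspose]
    calc _ = H' * M * (K * H) * Q * (H * K) * Mᴴ * H' := by
          rw [hKH, hHK, mul_one, mul_one]
          simp only [mul_assoc]
      _ = _ := by simp only [mul_assoc]
  have hS : (H * Q * H).IsHermitian := (hQ.mpow_mul_mul_mpow hP _).isHermitian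
  change fnorm (matFun Real.log (H' * (M * Q * Mᴴ) * H')) = fnorm (matFun Real.log (H * Q * H))
  rw [hconj, matFun_unitary_conj hV hS, fnorm_unitary_conj hV]

lemma rdist_one_left (S : Mat m) : rdist 1 S = fnorm (mlog S) := by
  rw [rdist, one_mpow, one_mul, mul_one]

lemma rdist_inv {P Q : Mat m} (hP : P.PosDef) (hQ : Q.PosDef) :
    rdist P⁻¹ Q⁻¹ = rdist P Q := by
  set H := mpow P (-(1/2))
  set K := mpow P (1/2)
  have sK : Kᴴ = K := (mpow_isHermitian hP.isHermitian _).eq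
  have hKPK : K * P⁻¹ * K = 1 := by
    rw [inv_eq_mpow_neg_one hP]
    exact mpow_mul_mpow_mul_mpow_of_add_eq_zero hP (by norm_num)
  have hKQK : K * Q⁻¹ * K = (H * Q * H)⁻¹ := by
    rw [Matrix.mul_inv_rev, Matrix.mul_inv_rev, inv_mpow hP, neg_neg, mul_assoc]
  have hS : (H * Q * H).PosDef := hQ.mpow_mul_mul_mpow hP _
  rw [← rdist_congr (mpow_isUnit hP (1/2)) hP.inv hQ.inv, sK, hKPK, hKQK, rdist_one_left,
    mlog_inv hS, fnorm_neg]
  rfl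

end RiemannianDistance

section GeometricMean
variable {m : ℕ}

lemma geom_posDef {X A : Mat m} (hX : X.PosDef) (hA : A.PosDef) (t : ℝ) :
    (geom X t A).PosDef :=
  (mpow_posDef (hA.mpow_mul_mul_mpow hX _) t).mpow_mul_mul_mpow hX _

lemma geom_neg {X A : Mat m} (hX : X.PosDef) (hA : A.PosDef) (t : ℝ) :
    geom X (-t) A = X * (geom X t A)⁻¹ * X := by
  set M := mpow X (1/2)
  set N := mpow X (-(1/2))
  set C := N * A * N
  have hC : C.PosDef := hA.mpow_mul_mul_mpow hX _
  have hXN : X * N = M := by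
    rw [← mpow_one hX.isHermitian, ← mpow_add hX]
    norm_num [M]
  have hNX : N * X = M := by
    conv_lhs => rw [← mpow_one hX.isHermitian]
    rw [← mpow_add hX]
    norm_num [M]
  change M * mpow C (-t) * M = X * (M * mpow C t * M)⁻¹ * X
  rw [Matrix.mul_inv_rev, Matrix.mul_inv_rev, inv_mpow hX, inv_mpow hC]
  simp only [← mul_assoc]
  rw [hXN, mul_assoc _ N X, hNX]

end GeometricMean

theorem stmt6_general {m : ℕ} (X A B : Mat m) (hX : X.PosDef) (hA : A.PosDef) (hB : B.PosDef)
    (t : ℝ) :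
    rdist (geom X (-t) A) (geom X (-t) B) = rdist (geom X t A) (geom X t B) := by
  have hPA := geom_posDef hX hA t
  have hPB := geom_posDef hX hB t
  calc rdist (geom X (-t) A) (geom X (-t) B)
      = rdist (X * (geom X t A)⁻¹ * Xᴴ) (X * (geom X t B)⁻¹ * Xᴴ) := by
        rw [geom_neg hX hA, geom_neg hX hB, hX.isHermitian.eq]
    _ = rdist (geom X t A) (geom X t B) := by
        rw [rdist_congr hX.isUnit hPA.inv hPB.inv, rdist_inv hPA hPB]

/-- `d(X #_{-t} A, X #_{-t} B) = d(X #_t A, X #_t B)` for `t ∈ [0,1]`. -/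
theorem stmt6 {m : ℕ} (X A B : Mat m) (hX : X.PosDef) (hA : A.PosDef) (hB : B.PosDef)
    (t : ℝ) (ht : t ∈ Set.Icc (0:ℝ) 1) :
    rdist (geom X (-t) A) (geom X (-t) B) = rdist (geom X t A) (geom X t B) :=
  stmt6_general X A B hX hA hB t
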